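/- Let G be a finite simple graph and (i,j) ∈ E. Let ζ_ij be the minimum cardinality of a vertex cover of the reduced graph G^{(i,j)} and let δ̄(i,j) be the minimum cardinality of a vertex cover S of G with |S ∩ {i,j}| = 1. Then ζ_ij + |Δ_ij| + 1 = δ̄(i,j). -/

import Mathlib

/-!
Let `S` be a vertex cover of `G` containing exactly one of `i`, `j`. Every neighbour of the
missing endpoint lies in `S`; in particular `Δ_ij ⊆ S`, and every added edge `s – t`
(`s ∈ D_i`, `t ∈ D_j`) of `G^{(i,j)}` is covered by `S \ ({i,j} ∪ Δ_ij)`, a cover of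
`G^{(i,j)}` at least `|Δ_ij| + 1` smaller than `S`.

Conversely, for a cover `R` of `G^{(i,j)}` the set `R* = R ∪ Δ_ij ∪ {x}` is such a cover of
`G`, of size `|R| + |Δ_ij| + 1`. If `D_i ⊆ R` one takes `x = j`. Otherwise some `s ∈ D_i` is
missing from `R`, and the edges `s – t` of `G^{(i,j)}` force `D_j ⊆ R`, so `x = i` works.
-/

variable {V : Type*} [Fintype V] [DecidableEq V]

/-- `S` is a vertex cover of `G`: every edge has at least one endpoint in `S`. -/
def IsVertexCover (G : SimpleGraph V) (S : Finset V) : Prop :=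
  ∀ ⦃a b : V⦄, G.Adj a b → a ∈ S ∨ b ∈ S

/-- `Δ_ij`: the common neighbours of `i` and `j`. -/
def DeltaSet (G : SimpleGraph V) [DecidableRel G.Adj] (i j : V) : Finset V :=
  Finset.univ.filter fun k => G.Adj i k ∧ G.Adj j k

/-- `D_i`: the neighbours of `i` other than `j` that are not common neighbours
of `i` and `j`.  (`D_j` is `DSide G j i`.) -/
def DSide (G : SimpleGraph V) [DecidableRel G.Adj] (i j : V) : Finset V :=
  Finset.univ.filter fun s => G.Adj i s ∧ s ≠ j ∧ s ∉ DeltaSet G i j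

/-- The removed vertex set `{i, j} ∪ Δ_ij`. -/
def RemovedSet (G : SimpleGraph V) [DecidableRel G.Adj] (i j : V) : Finset V :=
  insert i (insert j (DeltaSet G i j))

/-- The reduced graph `G^{(i,j)}`: vertices outside `{i,j} ∪ Δ_ij`, with the edges of
`G` between such vertices together with all pairs `(s,t)`, `s ∈ D_i`, `t ∈ D_j`. -/
def ReducedGraph (G : SimpleGraph V) [DecidableRel G.Adj] (i j : V) : SimpleGraph V :=
  SimpleGraph.fromRel fun a b =>
    a ∉ RemovedSet G i j ∧ b ∉ RemovedSet G i j ∧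
      (G.Adj a b ∨ (a ∈ DSide G i j ∧ b ∈ DSide G j i))

/-- `R` is a vertex cover of the reduced graph `G^{(i,j)}`: it is a subset of the
vertex set of `G^{(i,j)}` and covers all its edges. -/
def IsReducedVC (G : SimpleGraph V) [DecidableRel G.Adj] (i j : V) (R : Finset V) :
    Prop :=
  (∀ v ∈ R, v ∉ RemovedSet G i j) ∧
    ∀ ⦃a b : V⦄, (ReducedGraph G i j).Adj a b → a ∈ R ∨ b ∈ R

/-- `R* = R ∪ Δ_ij ∪ {j}` if `D_i ⊆ R`, and `R* = R ∪ Δ_ij ∪ {i}` otherwise. -/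
def RStar (G : SimpleGraph V) [DecidableRel G.Adj] (i j : V) (R : Finset V) :
    Finset V :=
  if DSide G i j ⊆ R then R ∪ DeltaSet G i j ∪ {j} else R ∪ DeltaSet G i j ∪ {i}

/-- `ζ_ij`: the minimum cardinality of a vertex cover of the reduced graph
`G^{(i,j)}`. -/
noncomputable def zeta (G : SimpleGraph V) [DecidableRel G.Adj] (i j : V) : ℕ :=
  sInf {n : ℕ | ∃ R : Finset V, IsReducedVC G i j R ∧ R.card = n}

/-- `δ̄(i,j)`: the minimum cardinality of a vertex cover `S` of `G` with
`|S ∩ {i,j}| = 1`. -/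
noncomputable def minRestrictedVC (G : SimpleGraph V) (i j : V) : ℕ :=
  sInf {n : ℕ | ∃ S : Finset V,
    (IsVertexCover G S ∧ (({i, j} : Finset V) ∩ S).card = 1) ∧ S.card = n}

open Finset

lemma card_pair_inter_eq_one_iff {α : Type*} [DecidableEq α] {a b : α} (hab : a ≠ b)
    (s : Finset α) : ({a, b} ∩ s).card = 1 ↔ Xor (a ∈ s) (b ∈ s) := by
  by_cases ha : a ∈ s <;> by_cases hb : b ∈ s <;>
    simp [insert_inter_of_mem, insert_inter_of_notMem, ha, hb, hab]

section ReducedGraph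

variable {G : SimpleGraph V} [DecidableRel G.Adj] {i j : V}

omit [DecidableEq V] in
@[simp]
lemma mem_deltaSet {k : V} : k ∈ DeltaSet G i j ↔ G.Adj i k ∧ G.Adj j k := by
  simp [DeltaSet]

@[simp]
lemma mem_dSide {s : V} : s ∈ DSide G i j ↔ G.Adj i s ∧ s ≠ j ∧ ¬G.Adj j s := by
  simp +contextual [DSide]

@[simp]
lemma mem_removedSet {v : V} :
    v ∈ RemovedSet G i j ↔ v = i ∨ v = j ∨ G.Adj i v ∧ G.Adj j v := by
  simp [RemovedSet]

variable {R : Finset V}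

lemma IsReducedVC.mem_or_mem_of_adj (hR : IsReducedVC G i j R) {a b : V} (hab : G.Adj a b)
    (ha : a ∉ RemovedSet G i j) (hb : b ∉ RemovedSet G i j) : a ∈ R ∨ b ∈ R :=
  hR.2 <| (SimpleGraph.fromRel_adj _ _ _).2 ⟨hab.ne, .inl ⟨ha, hb, .inl hab⟩⟩

lemma IsReducedVC.mem_or_mem_of_mem_dSide (hR : IsReducedVC G i j R) {s t : V}
    (hs : s ∈ DSide G i j) (ht : t ∈ DSide G j i) : s ∈ R ∨ t ∈ R := by
  simp only [mem_dSide] at hs ht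
  refine hR.2 <| (SimpleGraph.fromRel_adj _ _ _).2 ⟨?_, .inl ⟨?_, ?_, .inr ⟨?_, ?_⟩⟩⟩
  · rintro rfl
    exact hs.2.2 ht.1
  · simp [hs.1.ne', hs.2.1, hs.2.2]
  · simp [ht.1.ne', ht.2.1, ht.2.2]
  · simpa using hs
  · simpa using ht

lemma IsReducedVC.isVertexCover_of_superset (hR : IsReducedVC G i j R) {S : Finset V}
    (hRS : R ∪ DeltaSet G i j ⊆ S) (hi : ∀ b, G.Adj i b → i ∈ S ∨ b ∈ S)
    (hj : ∀ b, G.Adj j b → j ∈ S ∨ b ∈ S) : IsVertexCover G S := by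
  intro a b hab
  obtain rfl | hai := eq_or_ne a i; · exact hi b hab
  obtain rfl | haj := eq_or_ne a j; · exact hj b hab
  obtain rfl | hbi := eq_or_ne b i; · exact (hi a hab.symm).symm
  obtain rfl | hbj := eq_or_ne b j; · exact (hj a hab.symm).symm
  by_cases haΔ : a ∈ DeltaSet G i j; · exact .inl (hRS (mem_union_right _ haΔ))
  by_cases hbΔ : b ∈ DeltaSet G i j; · exact .inr (hRS (mem_union_right _ hbΔ))
  simp only [mem_deltaSet] at haΔ hbΔ
  exact (hR.mem_or_mem_of_adj hab (by simp [*]) (by simp [*])).imp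
    (fun h => hRS (mem_union_left _ h)) (fun h => hRS (mem_union_left _ h))

lemma IsReducedVC.notMem_of_mem_removedSet (hR : IsReducedVC G i j R) {v : V}
    (hv : v ∈ RemovedSet G i j) : v ∉ R :=
  fun h => hR.1 v h hv

lemma IsReducedVC.isVertexCover_rStar (hR : IsReducedVC G i j R) :
    IsVertexCover G (RStar G i j R) := by
  unfold RStar
  split_ifs with hD
  · refine hR.isVertexCover_of_superset subset_union_left (fun b hb => .inr ?_)
      (fun _ _ => .inl (by simp))
    by_cases hbj : b = j
    · simp [hbj]
    by_cases hbΔ : G.Adj j b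
    · simp [hb, hbΔ]
    exact mem_union_left _ (mem_union_left _ (hD (by simp [hb, hbj, hbΔ])))
  · obtain ⟨s, hs, hsR⟩ := not_subset.1 hD
    refine hR.isVertexCover_of_superset subset_union_left (fun _ _ => .inl (by simp))
      fun b hb => .inr ?_
    by_cases hbi : b = i
    · simp [hbi]
    by_cases hbΔ : G.Adj i b
    · simp [hb, hbΔ]
    have hbD : b ∈ DSide G j i := by simp [hb, hbi, hbΔ]
    exact mem_union_left _ <| mem_union_left _ <|
      (hR.mem_or_mem_of_mem_dSide hs hbD).resolve_left hsR

lemma IsReducedVC.card_rStar (hR : IsReducedVC G i j R) :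
    (RStar G i j R).card = R.card + (DeltaSet G i j).card + 1 := by
  have hRΔ : Disjoint R (DeltaSet G i j) :=
    disjoint_right.2 fun v hv => hR.notMem_of_mem_removedSet (by simp_all)
  unfold RStar
  split_ifs <;>
    rw [card_union_of_disjoint (by simp [hR.notMem_of_mem_removedSet]),
      card_union_of_disjoint hRΔ, card_singleton]

lemma IsReducedVC.xor_mem_rStar (hR : IsReducedVC G i j R) (hij : i ≠ j) :
    Xor (i ∈ RStar G i j R) (j ∈ RStar G i j R) := by
  unfold RStar
  split_ifs <;> simp [hij, hij.symm, hR.notMem_of_mem_removedSet]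

variable {S : Finset V}

omit [DecidableEq V] in
lemma IsVertexCover.deltaSet_subset (hS : IsVertexCover G S) (hij : Xor (i ∈ S) (j ∈ S)) :
    DeltaSet G i j ⊆ S := by
  intro k hk
  rw [mem_deltaSet] at hk
  rcases hij with ⟨-, hj⟩ | ⟨-, hi⟩
  · exact (hS hk.2).resolve_left hj
  · exact (hS hk.1).resolve_left hi

lemma IsVertexCover.isReducedVC_sdiff (hS : IsVertexCover G S) (hij : Xor (i ∈ S) (j ∈ S)) :
    IsReducedVC G i j (S \ RemovedSet G i j) := by
  have cover : ∀ a b, G.Adj a b ∨ a ∈ DSide G i j ∧ b ∈ DSide G j i → a ∈ S ∨ b ∈ S := by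
    rintro a b (hab | ⟨ha, hb⟩)
    · exact hS hab
    · rw [mem_dSide] at ha hb
      rcases hij with ⟨-, hj⟩ | ⟨-, hi⟩
      · exact .inr ((hS hb.1).resolve_left hj)
      · exact .inl ((hS ha.1).resolve_left hi)
  refine ⟨fun v hv => (mem_sdiff.1 hv).2, fun a b hab => ?_⟩
  simp only [mem_sdiff]
  rcases (SimpleGraph.fromRel_adj _ _ _).1 hab with ⟨-, ⟨ha, hb, h⟩ | ⟨hb, ha, h⟩⟩
  · exact (cover a b h).imp (⟨·, ha⟩) (⟨·, hb⟩)
  · exact (cover b a h).symm.imp (⟨·, ha⟩) (⟨·, hb⟩)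

lemma card_sdiff_removedSet_add_le (hij : Xor (i ∈ S) (j ∈ S)) (hΔ : DeltaSet G i j ⊆ S) :
    (S \ RemovedSet G i j).card + (DeltaSet G i j).card + 1 ≤ S.card := by
  obtain ⟨x, hxS, hx⟩ : ∃ x ∈ S, x = i ∨ x = j := by
    rcases hij with ⟨h, -⟩ | ⟨h, -⟩
    exacts [⟨i, h, .inl rfl⟩, ⟨j, h, .inr rfl⟩]
  have hxΔ : x ∉ DeltaSet G i j := by rcases hx with rfl | rfl <;> simp
  have hsub : insert x (DeltaSet G i j) ⊆ S ∩ RemovedSet G i j := by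
    refine insert_subset (mem_inter.2 ⟨hxS, by rcases hx with rfl | rfl <;> simp⟩)
      fun k hk => mem_inter.2 ⟨hΔ hk, ?_⟩
    simp_all
  calc (S \ RemovedSet G i j).card + (DeltaSet G i j).card + 1
      = (S \ RemovedSet G i j).card + (insert x (DeltaSet G i j)).card := by
        rw [card_insert_of_notMem hxΔ, add_assoc]
    _ ≤ (S \ RemovedSet G i j).card + (S ∩ RemovedSet G i j).card := by gcongr
    _ = S.card := card_sdiff_add_card_inter S _

lemma isReducedVC_univ_sdiff : IsReducedVC G i j (univ \ RemovedSet G i j) := by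
  refine ⟨fun v hv => (mem_sdiff.1 hv).2, fun a b hab => ?_⟩
  rcases (SimpleGraph.fromRel_adj _ _ _).1 hab with ⟨-, ⟨ha, -⟩ | ⟨-, hb, -⟩⟩
  · exact .inl (by simpa using ha)
  · exact .inl (by simpa using hb)

lemma zeta_le_card {R : Finset V} (hR : IsReducedVC G i j R) : zeta G i j ≤ R.card :=
  Nat.sInf_le ⟨R, hR, rfl⟩

variable (G i j) in
lemma exists_isReducedVC_card_eq_zeta : ∃ R, IsReducedVC G i j R ∧ R.card = zeta G i j :=
  Nat.sInf_mem (s := {n | ∃ R, IsReducedVC G i j R ∧ R.card = n})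
    ⟨_, _, isReducedVC_univ_sdiff, rfl⟩

end ReducedGraph

section RestrictedCover

variable {G : SimpleGraph V} {i j : V}

omit [Fintype V] in
lemma minRestrictedVC_le_card {S : Finset V} (hS : IsVertexCover G S)
    (hij : ({i, j} ∩ S).card = 1) : minRestrictedVC G i j ≤ S.card :=
  Nat.sInf_le ⟨S, ⟨hS, hij⟩, rfl⟩

omit [Fintype V] in
lemma exists_card_eq_minRestrictedVC {S : Finset V} (hS : IsVertexCover G S)
    (hij : ({i, j} ∩ S).card = 1) :
    ∃ T, (IsVertexCover G T ∧ ({i, j} ∩ T).card = 1) ∧ T.card = minRestrictedVC G i j :=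
  Nat.sInf_mem (s := {n | ∃ T, (IsVertexCover G T ∧ ({i, j} ∩ T).card = 1) ∧ T.card = n})
    ⟨_, _, ⟨hS, hij⟩, rfl⟩

end RestrictedCover

/-- For any edge `(i,j)` of `G`: `ζ_ij + |Δ_ij| + 1 = δ̄(i,j)`. -/
theorem zeta_add_delta_card_add_one (G : SimpleGraph V) [DecidableRel G.Adj]
    (i j : V) (hij : G.Adj i j) :
    zeta G i j + (DeltaSet G i j).card + 1 = minRestrictedVC G i j := by
  obtain ⟨R, hR, hRcard⟩ := exists_isReducedVC_card_eq_zeta G i j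
  have hRStar := (card_pair_inter_eq_one_iff hij.ne _).2 (hR.xor_mem_rStar hij.ne)
  obtain ⟨S, ⟨hS, hSij⟩, hScard⟩ := exists_card_eq_minRestrictedVC hR.isVertexCover_rStar hRStar
  rw [card_pair_inter_eq_one_iff hij.ne] at hSij
  refine le_antisymm ?_ ?_
  · calc zeta G i j + (DeltaSet G i j).card + 1
        ≤ (S \ RemovedSet G i j).card + (DeltaSet G i j).card + 1 := by
          gcongr
          exact zeta_le_card (hS.isReducedVC_sdiff hSij)
      _ ≤ S.card := card_sdiff_removedSet_add_le hSij (hS.deltaSet_subset hSij)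
      _ = minRestrictedVC G i j := hScard
  · calc minRestrictedVC G i j ≤ (RStar G i j R).card :=
          minRestrictedVC_le_card hR.isVertexCover_rStar hRStar
      _ = zeta G i j + (DeltaSet G i j).card + 1 := by rw [hR.card_rStar, hRcard]
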